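/- Let B(n,m) be the bi-moment matrix with B(n,0)=α^n, B(0,m)=β^m, B(n,m)=αβ(B(n,m-1)+B(n-1,m)) for n,m≥1, and L the bilinear form L(x^i ⊗ y^j) = B(i,j). Define P_n(x) = (x-α)(x-αβ)^(n-1), Q_m(y) = (y-β)(y-αβ)^(m-1) for n,m ≥ 1, P_0 = Q_0 = 1, Λ_0 = 1, Λ_n = (αβ)^(2n-1)(α+β-1) for n ≥ 1. Extend L to triples by L(x^i ⊗ z ⊗ y^j) where z ∈ {x-variable, y-variable} using L(x^i ⊗ x ⊗ y^j) = B(i+1, j). Then X(n,m) := L(P_n·x ⊗ Q_m) satisfies: X(0,0) = α·Λ_0, X(n,n) = αβ·Λ_n for n ≥ 1, X(n,n+1) = Λ_{n+1}, and X(n,m) = 0 otherwise. -/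

import Mathlib

/-!
Write `c = αβ` and `D = X - c`. The recurrence for `B` says exactly that the form `L` satisfies
`L(x f, y g) = c (L(x f, g) + L(f, y g))`, i.e. `L(x f, D g) = c L(f, y g)` and
`L(D f, y g) = c L(x f, g)`; moreover `L(f, 1) = f(α)` and `L(1, g) = g(β)`.
Peeling the common factors `D` off `x P_n` and `Q_m` therefore multiplies by `c²` per factor and
reduces every entry to a form of bounded degree: on and just above the diagonal it is an explicit
multiple of `α + β - 1`, and off these two diagonals a leftover factor `D` moves a variable
across, after which the factor `x - α` or `y - β` is evaluated at its root.
-/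

open Polynomial

/-- The bilinear form determined by the bi-moment matrix `B`:
`L(x^i ⊗ y^j) = B i j`, extended bilinearly. -/
def Lform (B : ℕ → ℕ → ℝ) (P Q : Polynomial ℝ) : ℝ :=
  ∑ i ∈ P.support, ∑ j ∈ Q.support, P.coeff i * Q.coeff j * B i j

noncomputable def bimomentForm (B : ℕ → ℕ → ℝ) : ℝ[X] →ₗ[ℝ] ℝ[X] →ₗ[ℝ] ℝ :=
  lsum fun i =>
    LinearMap.smulRight LinearMap.id (lsum fun j => LinearMap.smulRight LinearMap.id (B i j))

/-- `P_n = biorthPoly α (αβ) n` and `Q_m = biorthPoly β (αβ) m`. -/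
noncomputable def biorthPoly (a c : ℝ) : ℕ → ℝ[X]
  | 0 => 1
  | n + 1 => (X - C c) ^ n * (X - C a)

theorem Lform_eq_bimomentForm (B : ℕ → ℕ → ℝ) (f g : ℝ[X]) :
    Lform B f g = bimomentForm B f g := by
  simp [Lform, bimomentForm, lsum_apply, Polynomial.sum, LinearMap.sum_apply, Finset.mul_sum,
    mul_assoc]

theorem bimomentForm_monomial (B : ℕ → ℕ → ℝ) (n m : ℕ) (a b : ℝ) :
    bimomentForm B (monomial n a) (monomial m b) = a * b * B n m := by
  simp [bimomentForm, lsum_apply, sum_monomial_index, mul_assoc]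

theorem bimomentForm_sub_C_left (B : ℕ → ℕ → ℝ) (f g : ℝ[X]) (a : ℝ) :
    bimomentForm B (f - C a) g = bimomentForm B f g - a * bimomentForm B 1 g := by
  rw [show C a = a • (1 : ℝ[X]) by rw [smul_eq_C_mul, mul_one], map_sub, map_smul,
    LinearMap.sub_apply, LinearMap.smul_apply, smul_eq_mul]

theorem bimomentForm_sub_C_right (B : ℕ → ℕ → ℝ) (f g : ℝ[X]) (a : ℝ) :
    bimomentForm B f (g - C a) = bimomentForm B f g - a * bimomentForm B f 1 := by
  rw [show C a = a • (1 : ℝ[X]) by rw [smul_eq_C_mul, mul_one], map_sub, map_smul, smul_eq_mul]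

section BimomentForm

variable {α β : ℝ} {B : ℕ → ℕ → ℝ}

theorem bimomentForm_one_right (hB1 : ∀ n, B n 0 = α ^ n) (f : ℝ[X]) :
    bimomentForm B f 1 = f.eval α := by
  induction f using Polynomial.induction_on' with
  | add p q hp hq => simp only [map_add, LinearMap.add_apply, hp, hq, eval_add]
  | monomial n a => rw [← monomial_zero_one, bimomentForm_monomial]; simp [hB1]

theorem bimomentForm_one_left (hB2 : ∀ m, B 0 m = β ^ m) (g : ℝ[X]) :
    bimomentForm B 1 g = g.eval β := by
  induction g using Polynomial.induction_on' with
  | add p q hp hq => simp only [map_add, hp, hq, eval_add]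
  | monomial m b => rw [← monomial_zero_one, bimomentForm_monomial]; simp [hB2, mul_comm]

theorem bimomentForm_X_mul_X_mul
    (hB3 : ∀ n m, B (n + 1) (m + 1) = α * β * (B (n + 1) m + B n (m + 1))) (f g : ℝ[X]) :
    bimomentForm B (X * f) (X * g) =
      α * β * (bimomentForm B (X * f) g + bimomentForm B f (X * g)) := by
  induction f using Polynomial.induction_on' generalizing g with
  | add p q hp hq => simp only [mul_add, map_add, LinearMap.add_apply, hp, hq]; ring
  | monomial n a =>
    induction g using Polynomial.induction_on' with
    | add p q hp hq => simp only [mul_add, map_add, hp, hq]; ring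
    | monomial m b => simp only [X_mul_monomial, bimomentForm_monomial, hB3]; ring

theorem bimomentForm_X_mul_X_sub_mul
    (hB3 : ∀ n m, B (n + 1) (m + 1) = α * β * (B (n + 1) m + B n (m + 1))) (f g : ℝ[X]) :
    bimomentForm B (X * f) ((X - C (α * β)) * g) = α * β * bimomentForm B f (X * g) := by
  rw [show (X - C (α * β)) * g = X * g - (α * β) • g by rw [smul_eq_C_mul]; ring, map_sub,
    map_smul, bimomentForm_X_mul_X_mul hB3, smul_eq_mul]
  ring

theorem bimomentForm_X_sub_mul_X_mul
    (hB3 : ∀ n m, B (n + 1) (m + 1) = α * β * (B (n + 1) m + B n (m + 1))) (f g : ℝ[X]) :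
    bimomentForm B ((X - C (α * β)) * f) (X * g) = α * β * bimomentForm B (X * f) g := by
  rw [show (X - C (α * β)) * f = X * f - (α * β) • f by rw [smul_eq_C_mul]; ring, map_sub,
    map_smul, LinearMap.sub_apply, LinearMap.smul_apply, bimomentForm_X_mul_X_mul hB3, smul_eq_mul]
  ring

theorem bimomentForm_X_mul_pow_mul_pow
    (hB3 : ∀ n m, B (n + 1) (m + 1) = α * β * (B (n + 1) m + B n (m + 1))) (k : ℕ)
    (f g : ℝ[X]) :
    bimomentForm B (X * ((X - C (α * β)) ^ k * f)) ((X - C (α * β)) ^ k * g) =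
      (α * β) ^ (2 * k) * bimomentForm B (X * f) g := by
  induction k generalizing f g with
  | zero => simp
  | succ k ih =>
    rw [pow_succ', mul_assoc, mul_assoc, bimomentForm_X_mul_X_sub_mul hB3,
      bimomentForm_X_sub_mul_X_mul hB3, ih]
    ring

theorem bimomentForm_X_X (hB1 : ∀ n, B n 0 = α ^ n) (hB2 : ∀ m, B 0 m = β ^ m)
    (hB3 : ∀ n m, B (n + 1) (m + 1) = α * β * (B (n + 1) m + B n (m + 1))) :
    bimomentForm B X X = α * β * (α + β) := by
  have := bimomentForm_X_mul_X_mul hB3 1 1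
  simp only [mul_one] at this
  rw [this, bimomentForm_one_right hB1, bimomentForm_one_left hB2]
  simp

theorem bimomentForm_X_X_sub_C (hB1 : ∀ n, B n 0 = α ^ n) (hB2 : ∀ m, B 0 m = β ^ m)
    (hB3 : ∀ n m, B (n + 1) (m + 1) = α * β * (B (n + 1) m + B n (m + 1))) :
    bimomentForm B X (X - C β) = α * β * (α + β - 1) := by
  rw [bimomentForm_sub_C_right, bimomentForm_X_X hB1 hB2 hB3, bimomentForm_one_right hB1, eval_X]
  ring

theorem bimomentForm_X_mul_X_sub_C_X_sub_C (hB1 : ∀ n, B n 0 = α ^ n)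
    (hB2 : ∀ m, B 0 m = β ^ m)
    (hB3 : ∀ n m, B (n + 1) (m + 1) = α * β * (B (n + 1) m + B n (m + 1))) :
    bimomentForm B (X * (X - C α)) (X - C β) = (α * β) ^ 2 * (α + β - 1) := by
  have := bimomentForm_X_mul_X_mul hB3 (X - C α) 1
  rw [mul_one] at this
  rw [bimomentForm_sub_C_right, this, bimomentForm_sub_C_left, bimomentForm_X_X hB1 hB2 hB3]
  simp only [bimomentForm_one_right hB1, bimomentForm_one_left hB2, eval_mul, eval_X, eval_sub,
    eval_C, sub_self, mul_zero]
  ring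

theorem bimomentForm_X_mul_X_sub_C_X_sub_mul_X_sub_C (hB1 : ∀ n, B n 0 = α ^ n)
    (hB2 : ∀ m, B 0 m = β ^ m)
    (hB3 : ∀ n m, B (n + 1) (m + 1) = α * β * (B (n + 1) m + B n (m + 1))) :
    bimomentForm B (X * (X - C α)) ((X - C (α * β)) * (X - C β)) =
      (α * β) ^ 3 * (α + β - 1) := by
  have := bimomentForm_X_mul_X_mul hB3 1 (X - C β)
  rw [mul_one] at this
  rw [bimomentForm_X_mul_X_sub_mul hB3, bimomentForm_sub_C_left, this,
    bimomentForm_X_X_sub_C hB1 hB2 hB3]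
  simp only [bimomentForm_one_left hB2, eval_mul, eval_X, eval_sub, eval_C, sub_self, mul_zero]
  ring

theorem bimomentForm_X_sub_mul_X_sub_C_eq_zero (hB1 : ∀ n, B n 0 = α ^ n)
    (hB3 : ∀ n m, B (n + 1) (m + 1) = α * β * (B (n + 1) m + B n (m + 1))) {f : ℝ[X]}
    (hf : f.eval α = 0) :
    bimomentForm B ((X - C (α * β)) * f) (X - C β) = 0 := by
  have := bimomentForm_X_sub_mul_X_mul hB3 f 1
  rw [mul_one] at this
  rw [bimomentForm_sub_C_right, this]
  simp [bimomentForm_one_right hB1, hf]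

theorem bimomentForm_X_X_sub_mul_eq_zero (hB2 : ∀ m, B 0 m = β ^ m)
    (hB3 : ∀ n m, B (n + 1) (m + 1) = α * β * (B (n + 1) m + B n (m + 1))) {g : ℝ[X]}
    (hg : g.eval β = 0) :
    bimomentForm B X ((X - C (α * β)) * g) = 0 := by
  have := bimomentForm_X_mul_X_sub_mul hB3 1 g
  rw [mul_one] at this
  rw [this]
  simp [bimomentForm_one_left hB2, hg]

theorem bimomentForm_X_sub_C_X_sub_mul_eq_zero (hB2 : ∀ m, B 0 m = β ^ m)
    (hB3 : ∀ n m, B (n + 1) (m + 1) = α * β * (B (n + 1) m + B n (m + 1))) {g : ℝ[X]}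
    (hg : g.eval β = 0) :
    bimomentForm B (X - C α) ((X - C (α * β)) * g) = 0 := by
  rw [bimomentForm_sub_C_left, bimomentForm_X_X_sub_mul_eq_zero hB2 hB3 hg]
  simp [bimomentForm_one_left hB2, hg]

theorem bimomentForm_X_mul_biorthPoly_succ_one (hB1 : ∀ n, B n 0 = α ^ n) (n : ℕ) :
    bimomentForm B (X * biorthPoly α (α * β) (n + 1)) 1 = 0 := by
  simp [biorthPoly, bimomentForm_one_right hB1]

theorem bimomentForm_X_mul_biorthPoly_self (hB1 : ∀ n, B n 0 = α ^ n)
    (hB2 : ∀ m, B 0 m = β ^ m)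
    (hB3 : ∀ n m, B (n + 1) (m + 1) = α * β * (B (n + 1) m + B n (m + 1))) (n : ℕ) :
    bimomentForm B (X * biorthPoly α (α * β) (n + 1)) (biorthPoly β (α * β) (n + 1)) =
      (α * β) ^ (2 * n + 2) * (α + β - 1) := by
  rw [biorthPoly, biorthPoly, bimomentForm_X_mul_pow_mul_pow hB3,
    bimomentForm_X_mul_X_sub_C_X_sub_C hB1 hB2 hB3]
  ring

theorem bimomentForm_X_mul_biorthPoly_succ_right (hB1 : ∀ n, B n 0 = α ^ n)
    (hB2 : ∀ m, B 0 m = β ^ m)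
    (hB3 : ∀ n m, B (n + 1) (m + 1) = α * β * (B (n + 1) m + B n (m + 1))) (n : ℕ) :
    bimomentForm B (X * biorthPoly α (α * β) n) (biorthPoly β (α * β) (n + 1)) =
      (α * β) ^ (2 * n + 1) * (α + β - 1) := by
  rcases n with _ | n
  · simpa [biorthPoly] using bimomentForm_X_X_sub_C hB1 hB2 hB3
  · rw [biorthPoly, biorthPoly, pow_succ, mul_assoc, bimomentForm_X_mul_pow_mul_pow hB3,
      bimomentForm_X_mul_X_sub_C_X_sub_mul_X_sub_C hB1 hB2 hB3]
    ring

theorem bimomentForm_X_mul_biorthPoly_of_lt (hB1 : ∀ n, B n 0 = α ^ n)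
    (hB3 : ∀ n m, B (n + 1) (m + 1) = α * β * (B (n + 1) m + B n (m + 1))) (m d : ℕ) :
    bimomentForm B (X * biorthPoly α (α * β) (m + d + 2)) (biorthPoly β (α * β) (m + 1)) = 0 := by
  rw [biorthPoly, biorthPoly, show m + d + 1 = m + (d + 1) by ring, pow_add, mul_assoc,
    bimomentForm_X_mul_pow_mul_pow hB3,
    show X * ((X - C (α * β)) ^ (d + 1) * (X - C α)) =
      (X - C (α * β)) * (X * ((X - C (α * β)) ^ d * (X - C α))) by ring,
    bimomentForm_X_sub_mul_X_sub_C_eq_zero hB1 hB3 (by simp), mul_zero]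

theorem bimomentForm_X_mul_biorthPoly_of_add_two_le (hB2 : ∀ m, B 0 m = β ^ m)
    (hB3 : ∀ n m, B (n + 1) (m + 1) = α * β * (B (n + 1) m + B n (m + 1))) (n j : ℕ) :
    bimomentForm B (X * biorthPoly α (α * β) n) (biorthPoly β (α * β) (n + j + 2)) = 0 := by
  rcases n with _ | n
  · rw [biorthPoly, biorthPoly, mul_one, pow_succ', mul_assoc]
    exact bimomentForm_X_X_sub_mul_eq_zero hB2 hB3 (by simp)
  · rw [biorthPoly, biorthPoly, show n + 1 + j + 1 = n + (j + 2) by ring, pow_add, mul_assoc,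
      bimomentForm_X_mul_pow_mul_pow hB3, pow_succ', mul_assoc, bimomentForm_X_mul_X_sub_mul hB3,
      show X * ((X - C (α * β)) ^ (j + 1) * (X - C β)) =
        (X - C (α * β)) * (X * ((X - C (α * β)) ^ j * (X - C β))) by ring,
      bimomentForm_X_sub_C_X_sub_mul_eq_zero hB2 hB3 (by simp), mul_zero, mul_zero]

theorem bimomentForm_X_mul_biorthPoly_eq_zero (hB1 : ∀ n, B n 0 = α ^ n)
    (hB2 : ∀ m, B 0 m = β ^ m)
    (hB3 : ∀ n m, B (n + 1) (m + 1) = α * β * (B (n + 1) m + B n (m + 1))) {n m : ℕ}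
    (h₁ : m ≠ n) (h₂ : m ≠ n + 1) :
    bimomentForm B (X * biorthPoly α (α * β) n) (biorthPoly β (α * β) m) = 0 := by
  rcases lt_or_gt_of_ne h₁ with hlt | hgt
  · rcases m with _ | m
    · obtain ⟨n, rfl⟩ : ∃ k, n = k + 1 := ⟨n - 1, by omega⟩
      exact bimomentForm_X_mul_biorthPoly_succ_one hB1 n
    · obtain ⟨d, rfl⟩ : ∃ d, n = m + d + 2 := ⟨n - m - 2, by omega⟩
      exact bimomentForm_X_mul_biorthPoly_of_lt hB1 hB3 m d
  · obtain ⟨j, rfl⟩ : ∃ j, m = n + j + 2 := ⟨m - n - 2, by omega⟩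
    exact bimomentForm_X_mul_biorthPoly_of_add_two_le hB2 hB3 n j

end BimomentForm

theorem stmt_13 (α β : ℝ) (B : ℕ → ℕ → ℝ)
    (hB1 : ∀ n, B n 0 = α ^ n) (hB2 : ∀ m, B 0 m = β ^ m)
    (hB3 : ∀ n m, B (n + 1) (m + 1) = α * β * (B (n + 1) m + B n (m + 1)))
    (P Q : ℕ → Polynomial ℝ)
    (hP0 : P 0 = 1) (hP : ∀ n, 1 ≤ n → P n = (X - C α) * (X - C (α * β)) ^ (n - 1))
    (hQ0 : Q 0 = 1) (hQ : ∀ m, 1 ≤ m → Q m = (X - C β) * (X - C (α * β)) ^ (m - 1))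
    (Λ : ℕ → ℝ) (hΛ0 : Λ 0 = 1)
    (hΛ : ∀ n, 1 ≤ n → Λ n = (α * β) ^ (2 * n - 1) * (α + β - 1))
    (Xm : ℕ → ℕ → ℝ) (hX : ∀ n m, Xm n m = Lform B (P n * X) (Q m)) :
    Xm 0 0 = α * Λ 0 ∧
      (∀ n, 1 ≤ n → Xm n n = α * β * Λ n) ∧
      (∀ n, Xm n (n + 1) = Λ (n + 1)) ∧
      (∀ n m, m ≠ n → m ≠ n + 1 → Xm n m = 0) := by
  have hPn : P = biorthPoly α (α * β) := funext fun
    | 0 => hP0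
    | n + 1 => by rw [hP (n + 1) n.succ_pos, biorthPoly, Nat.add_sub_cancel, mul_comm]
  have hQm : Q = biorthPoly β (α * β) := funext fun
    | 0 => hQ0
    | m + 1 => by rw [hQ (m + 1) m.succ_pos, biorthPoly, Nat.add_sub_cancel, mul_comm]
  have hXm : ∀ n m,
      Xm n m = bimomentForm B (X * biorthPoly α (α * β) n) (biorthPoly β (α * β) m) := by
    intro n m
    rw [hX, Lform_eq_bimomentForm, hPn, hQm, mul_comm]
  refine ⟨?_, ?_, ?_, fun n m h₁ h₂ => (hXm n m).trans ?_⟩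
  · simp [hXm, hΛ0, biorthPoly, bimomentForm_one_right hB1]
  · rintro (_ | n) hn
    · omega
    · rw [hXm, bimomentForm_X_mul_biorthPoly_self hB1 hB2 hB3, hΛ _ hn,
        show 2 * (n + 1) - 1 = 2 * n + 1 by omega]
      ring
  · intro n
    rw [hXm, bimomentForm_X_mul_biorthPoly_succ_right hB1 hB2 hB3, hΛ _ n.succ_pos,
      show 2 * (n + 1) - 1 = 2 * n + 1 by omega]
  · exact bimomentForm_X_mul_biorthPoly_eq_zero hB1 hB2 hB3 h₁ h₂
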